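/- arXiv:1307.0861 — 6 statements merged into one kernel-verified Lean document; each statement's English description precedes it below -/
import Mathlib

section
/- Let Σ_x be a real n×n positive semidefinite matrix and Φ a real ℓ×n matrix. For every σ² > 0, the matrices σ²·I_ℓ + Φ·Σ_x·Φᵀ and I_n + σ⁻²·Σ are invertible (the former being positive definite), and tr(Σ_x − Σ_x·Φᵀ·(σ²·I_ℓ + Φ·Σ_x·Φᵀ)⁻¹·Φ·Σ_x) = tr(Σ_x·(I_n + σ⁻²·Σ)⁻¹), where Σ := Σ_x^{1/2}·Φᵀ·Φ·Σ_x^{1/2} and Σ_x^{1/2} is the positive semidefinite square root of Σ_x. -/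
/-!
With `S := Σ_x^{1/2}` and `A := Φ S` one has `Φ Σ_x Φᵀ = A Aᵀ` and `Σ = Aᵀ A`. Pushing `A`
through the resolvent, `A Aᵀ = (σ² + A Aᵀ) - σ²`, shows that `1 - Aᵀ (σ² + A Aᵀ)⁻¹ A`
inverts `1 + σ⁻² Aᵀ A`. Since `Σ_x = S S`, the left-hand side is
`tr (S (1 - Aᵀ (σ² + A Aᵀ)⁻¹ A) S)`, and cyclicity of the trace finishes.
-/

open Matrix

namespace Matrix.PosSemidef

open scoped ComplexOrder

/-- The square root of a positive semidefinite matrix, as defined in Mathlib (Dec 2024). -/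
noncomputable def sqrt {n 𝕜 : Type*} [Fintype n] [RCLike 𝕜] [DecidableEq n]
    {A : Matrix n n 𝕜} (hA : PosSemidef A) : Matrix n n 𝕜 :=
  hA.1.eigenvectorUnitary.1 * diagonal ((↑) ∘ (√·) ∘ hA.1.eigenvalues) *
  (star hA.1.eigenvectorUnitary : Matrix n n 𝕜)

end Matrix.PosSemidef

namespace Matrix.PosSemidef

open scoped ComplexOrder

variable {n 𝕜 : Type*} [Fintype n] [RCLike 𝕜] [DecidableEq n] {A : Matrix n n 𝕜}

lemma posSemidef_sqrt (hA : A.PosSemidef) : hA.sqrt.PosSemidef :=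
  (posSemidef_diagonal_iff.mpr fun i ↦ by simp [Real.sqrt_nonneg]).mul_mul_conjTranspose_same
    hA.1.eigenvectorUnitary.1

lemma sqrt_mul_self (hA : A.PosSemidef) : hA.sqrt * hA.sqrt = A := by
  conv_rhs => rw [hA.1.spectral_theorem, Unitary.conjStarAlgAut_apply]
  have hU : (star hA.1.eigenvectorUnitary : Matrix n n 𝕜) * hA.1.eigenvectorUnitary.1 = 1 :=
    Unitary.coe_star_mul_self _
  simp only [sqrt, Matrix.mul_assoc]
  rw [← Matrix.mul_assoc _ _ (diagonal _ * _), hU, Matrix.one_mul, ← Matrix.mul_assoc (diagonal _),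
    diagonal_mul_diagonal]
  congr 3 with i
  simp [← RCLike.ofReal_mul, Real.mul_self_sqrt (hA.eigenvalues_nonneg i)]

end Matrix.PosSemidef

namespace Matrix

variable {m n R : Type*} [Fintype m] [Fintype n] [DecidableEq m] [DecidableEq n] [Field R]

lemma one_sub_mul_inv_mul_mul_one_add_smul {c : R} (hc : c ≠ 0) (A : Matrix m n R)
    (B : Matrix n m R) (hM : IsUnit (c • 1 + A * B).det) :
    (1 - B * (c • 1 + A * B)⁻¹ * A) * (1 + c⁻¹ • (B * A)) = 1 := by
  set M := c • 1 + A * B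
  have hpush : B * M⁻¹ * A * (B * A) = B * A - c • (B * M⁻¹ * A) := by
    calc B * M⁻¹ * A * (B * A) = B * (M⁻¹ * (M - c • 1)) * A := by
          simp only [M, add_sub_cancel_left, Matrix.mul_assoc]
      _ = B * A - c • (B * M⁻¹ * A) := by
          rw [Matrix.mul_sub, nonsing_inv_mul _ hM, Matrix.mul_smul, Matrix.mul_one,
            Matrix.mul_sub, Matrix.sub_mul, Matrix.mul_one, Matrix.mul_smul, Matrix.smul_mul,
            Matrix.mul_assoc]
  rw [Matrix.sub_mul, Matrix.one_mul, Matrix.mul_add, Matrix.mul_one, Matrix.mul_smul, hpush,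
    smul_sub, smul_smul, inv_mul_cancel₀ hc, one_smul]
  abel

end Matrix

/-- For σ² > 0, the matrix σ²·I_ℓ + Φ·Σ_x·Φᵀ is positive definite (hence
invertible), I_n + σ⁻²·Σ is invertible, and
tr(Σ_x − Σ_x·Φᵀ·(σ²·I_ℓ + Φ·Σ_x·Φᵀ)⁻¹·Φ·Σ_x) = tr(Σ_x·(I_n + σ⁻²·Σ)⁻¹), where
Σ = Σ_x^{1/2}·Φᵀ·Φ·Σ_x^{1/2}. -/
theorem stmt_0 {n l : ℕ} (Sx : Matrix (Fin n) (Fin n) ℝ) (hSx : Sx.PosSemidef)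
    (Φ : Matrix (Fin l) (Fin n) ℝ) (σ2 : ℝ) (hσ2 : 0 < σ2) :
    (σ2 • (1 : Matrix (Fin l) (Fin l) ℝ) + Φ * Sx * Φᵀ).PosDef ∧
    IsUnit (σ2 • (1 : Matrix (Fin l) (Fin l) ℝ) + Φ * Sx * Φᵀ).det ∧
    IsUnit ((1 : Matrix (Fin n) (Fin n) ℝ) + σ2⁻¹ • (hSx.sqrt * Φᵀ * Φ * hSx.sqrt)).det ∧
    (Sx - Sx * Φᵀ * (σ2 • (1 : Matrix (Fin l) (Fin l) ℝ) + Φ * Sx * Φᵀ)⁻¹ * Φ * Sx).trace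
      = (Sx * ((1 : Matrix (Fin n) (Fin n) ℝ)
          + σ2⁻¹ • (hSx.sqrt * Φᵀ * Φ * hSx.sqrt))⁻¹).trace := by
  set S := hSx.sqrt
  have hST : Sᵀ = S := by
    simpa [conjTranspose_eq_transpose_of_trivial] using hSx.posSemidef_sqrt.isHermitian.eq
  have hSS : S * S = Sx := hSx.sqrt_mul_self
  set A := Φ * S
  have hAAt : Φ * Sx * Φᵀ = A * Aᵀ := by
    simp only [A, transpose_mul, hST, ← hSS, Matrix.mul_assoc]
  have hAtA : S * Φᵀ * Φ * S = Aᵀ * A := by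
    simp only [A, transpose_mul, hST, Matrix.mul_assoc]
  have hpd : (σ2 • (1 : Matrix (Fin l) (Fin l) ℝ) + Φ * Sx * Φᵀ).PosDef :=
    (PosDef.one.smul hσ2).add_posSemidef
      (by simpa [conjTranspose_eq_transpose_of_trivial] using hSx.mul_mul_conjTranspose_same Φ)
  have hdet := (isUnit_iff_isUnit_det _).mp hpd.isUnit
  have hleft := one_sub_mul_inv_mul_mul_one_add_smul hσ2.ne' A Aᵀ (hAAt ▸ hdet)
  refine ⟨hpd, hdet, hAtA ▸ isUnit_det_of_left_inverse hleft, ?_⟩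
  rw [hAAt, hAtA, inv_eq_left_inv hleft]
  calc (Sx - Sx * Φᵀ * (σ2 • 1 + A * Aᵀ)⁻¹ * Φ * Sx).trace
      = (S * (1 - Aᵀ * (σ2 • 1 + A * Aᵀ)⁻¹ * A) * S).trace := by
        simp only [A, ← hSS, transpose_mul, hST, Matrix.mul_sub, Matrix.sub_mul, Matrix.mul_one,
          Matrix.mul_assoc]
    _ = (Sx * (1 - Aᵀ * (σ2 • 1 + A * Aᵀ)⁻¹ * A)).trace := by
        rw [trace_mul_cycle, hSS]
end

section
/- Let Σ_x be a real n×n positive semidefinite matrix, Φ a real ℓ×n matrix, and Σ := Σ_x^{1/2}·Φᵀ·Φ·Σ_x^{1/2}. Let u₁,…,u_n be an orthonormal basis of ℝⁿ consisting of eigenvectors of Σ, with Σ·uᵢ = λᵢ·uᵢ and λᵢ ≥ 0. Then lim_{σ²→0⁺} (MMSE(σ²) − Σ_{i : λᵢ = 0} uᵢᵀ·Σ_x·uᵢ) / σ² = Σ_{i : λᵢ > 0} (1/λᵢ) · uᵢᵀ·Σ_x·uᵢ. In other words, MMSE(σ²) = M_∞ + D·σ² + o(σ²) as σ² → 0⁺,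 with M_∞ = Σ_{i : λᵢ = 0} uᵢᵀ·Σ_x·uᵢ and D = Σ_{i : λᵢ > 0} λᵢ⁻¹·uᵢᵀ·Σ_x·uᵢ. -/
open Matrix Filter Topology
open scoped MatrixOrder

/-!
Write `S = Σ_x^{1/2}` and `A = Φ S`, so that `Σ = Aᵀ A` and `Φ Σ_x Φᵀ = A Aᵀ`. The push-through
identity `Aᵀ (σ² + A Aᵀ)⁻¹ = (σ² + Aᵀ A)⁻¹ Aᵀ` turns the MMSE into
`tr (Σ_x (1 - (σ² + Σ)⁻¹ Σ)) = σ² tr (Σ_x (σ² + Σ)⁻¹)`, which in the eigenbasis of `Σ` reads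
`σ² ∑ᵢ (σ² + λᵢ)⁻¹ uᵢᵀ Σ_x uᵢ`. The terms with `λᵢ = 0` contribute exactly `M_∞`, and the
remaining ones, divided by `σ²`, are continuous at `σ² = 0` with value `D`.
-/

namespace Matrix

variable {m n R : Type*} [Fintype m] [Fintype n] [DecidableEq m] [DecidableEq n]

theorem mul_inv_smul_one_add_mul_comm [CommRing R] (A : Matrix m n R) (B : Matrix n m R) (c : R)
    (hAB : IsUnit (c • 1 + A * B).det) (hBA : IsUnit (c • 1 + B * A).det) :
    B * (c • 1 + A * B)⁻¹ = (c • 1 + B * A)⁻¹ * B := by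
  have hcomm : (c • 1 + B * A) * B = B * (c • 1 + A * B) := by
    simp only [Matrix.add_mul, Matrix.mul_add, Matrix.smul_mul, Matrix.mul_smul, Matrix.one_mul,
      Matrix.mul_one, Matrix.mul_assoc]
  calc B * (c • 1 + A * B)⁻¹
      = (c • 1 + B * A)⁻¹ * ((c • 1 + B * A) * B) * (c • 1 + A * B)⁻¹ := by
        rw [nonsing_inv_mul_cancel_left _ _ hBA]
    _ = (c • 1 + B * A)⁻¹ * B := by
        rw [hcomm, Matrix.mul_assoc, mul_nonsing_inv_cancel_right _ _ hAB]

theorem trace_eq_sum_dotProduct_mulVec [CommRing R] (u : n → n → R)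
    (hu : ∀ i j, u i ⬝ᵥ u j = if i = j then 1 else 0) (M : Matrix n n R) :
    M.trace = ∑ i, u i ⬝ᵥ M *ᵥ u i := by
  have hUUt : of u * (of u)ᵀ = 1 := by
    ext i j
    simpa [mul_apply, one_apply, dotProduct] using hu i j
  calc M.trace = (M * ((of u)ᵀ * of u)).trace := by rw [mul_eq_one_comm.mp hUUt, Matrix.mul_one]
    _ = (of u * M * (of u)ᵀ).trace := by rw [← Matrix.mul_assoc, trace_mul_cycle]
    _ = ∑ i, u i ⬝ᵥ M *ᵥ u i := by
        simp only [trace, diag, mul_mul_apply, transpose_transpose]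
        rfl

theorem inv_mulVec_eq_inv_smul [Field R] {M : Matrix n n R} {v : n → R} {c : R}
    (hM : IsUnit M.det) (hv : M *ᵥ v = c • v) : M⁻¹ *ᵥ v = c⁻¹ • v := by
  have hv' : v = c • M⁻¹ *ᵥ v := by
    rw [← mulVec_smul, ← hv, mulVec_mulVec, nonsing_inv_mul _ hM, one_mulVec]
  rcases eq_or_ne c 0 with rfl | hc
  · rw [hv', zero_smul, mulVec_zero, smul_zero]
  · rw [hv', smul_smul, inv_mul_cancel₀ hc, one_smul, ← hv']

theorem trace_mul_inv_eq_sum_of_eigenbasis [Field R] (M N : Matrix n n R) (hN : IsUnit N.det)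
    (u : n → n → R) (μ : n → R) (hu : ∀ i j, u i ⬝ᵥ u j = if i = j then 1 else 0)
    (hN_eig : ∀ i, N *ᵥ u i = μ i • u i) :
    (M * N⁻¹).trace = ∑ i, (μ i)⁻¹ * (u i ⬝ᵥ M *ᵥ u i) := by
  rw [trace_eq_sum_dotProduct_mulVec u hu]
  refine Finset.sum_congr rfl fun i _ => ?_
  rw [← mulVec_mulVec, inv_mulVec_eq_inv_smul hN (hN_eig i), mulVec_smul, dotProduct_smul,
    smul_eq_mul]

theorem isUnit_det_smul_one_add {P : Matrix n n ℝ} (hP : P.PosSemidef) {c : ℝ} (hc : 0 < c) :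
    IsUnit (c • 1 + P).det :=
  ((PosDef.one.smul hc).add_posSemidef hP).det_pos.ne'.isUnit

end Matrix

variable {n l : Type*} [Fintype n] [Fintype l] [DecidableEq n]

noncomputable def gaussianMMSE [DecidableEq l] (Sx : Matrix n n ℝ) (Φ : Matrix l n ℝ) (σ2 : ℝ) :
    ℝ :=
  (Sx - Sx * Φᵀ * (σ2 • (1 : Matrix l l ℝ) + Φ * Sx * Φᵀ)⁻¹ * Φ * Sx).trace

theorem posSemidef_sqrt_mul_transpose_mul_mul_sqrt (Sx : Matrix n n ℝ) (Φ : Matrix l n ℝ) :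
    (CFC.sqrt Sx * Φᵀ * Φ * CFC.sqrt Sx).PosSemidef := by
  have hS : (CFC.sqrt Sx)ᴴ = CFC.sqrt Sx := (CFC.sqrt_nonneg Sx).posSemidef.isHermitian.eq
  simpa only [hS, conjTranspose_eq_transpose_of_trivial, Matrix.mul_assoc] using
    (posSemidef_conjTranspose_mul_self Φ).conjTranspose_mul_mul_same (CFC.sqrt Sx)

theorem gaussianMMSE_eq_mul_trace_mul_inv [DecidableEq l] {Sx : Matrix n n ℝ} (hSx : Sx.PosSemidef)
    (Φ : Matrix l n ℝ) {σ2 : ℝ} (hσ2 : 0 < σ2) :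
    gaussianMMSE Sx Φ σ2 = σ2 * (Sx * (σ2 • 1 + CFC.sqrt Sx * Φᵀ * Φ * CFC.sqrt Sx)⁻¹).trace := by
  set S := CFC.sqrt Sx
  have hS : Sᵀ = S := (CFC.sqrt_nonneg Sx).posSemidef.isHermitian.eq
  have hSS : S * S = Sx := CFC.sqrt_mul_sqrt_self Sx hSx.nonneg
  set Sig := S * Φᵀ * Φ * S
  set C : Matrix n n ℝ := σ2 • 1 + Sig
  have hC : IsUnit C.det :=
    isUnit_det_smul_one_add (posSemidef_sqrt_mul_transpose_mul_mul_sqrt Sx Φ) hσ2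
  set B : Matrix l l ℝ := σ2 • 1 + Φ * Sx * Φᵀ
  have hSig : (Φ * S)ᵀ * (Φ * S) = Sig := by
    rw [transpose_mul, hS]; simp only [Sig, Matrix.mul_assoc]
  have hB : B = σ2 • 1 + (Φ * S) * (Φ * S)ᵀ := by
    rw [transpose_mul, hS]; simp only [B, ← hSS, Matrix.mul_assoc]
  have hpush : (Φ * S)ᵀ * B⁻¹ = C⁻¹ * (Φ * S)ᵀ := by
    rw [hB, mul_inv_smul_one_add_mul_comm, hSig]
    · rw [← hB]; exact isUnit_det_smul_one_add (hSx.mul_mul_conjTranspose_same Φ) hσ2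
    · rwa [hSig]
  have hproj : 1 - C⁻¹ * Sig = σ2 • C⁻¹ := by
    rw [← nonsing_inv_mul C hC, ← Matrix.mul_sub, add_sub_cancel_right, Matrix.mul_smul,
      Matrix.mul_one]
  have hL : Sx * Φᵀ = S * (Φ * S)ᵀ := by rw [transpose_mul, hS, ← hSS, Matrix.mul_assoc]
  have hR : Φ * Sx = Φ * S * S := by rw [← hSS, Matrix.mul_assoc]
  calc gaussianMMSE Sx Φ σ2 = (Sx - Sx * Φᵀ * B⁻¹ * Φ * Sx).trace := rfl
    _ = (Sx - S * ((Φ * S)ᵀ * B⁻¹ * (Φ * S)) * S).trace := by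
        rw [hL, Matrix.mul_assoc _ Φ Sx, hR]
        simp only [Matrix.mul_assoc]
    _ = (Sx * (1 - C⁻¹ * Sig)).trace := by
        rw [hpush, Matrix.mul_assoc C⁻¹, hSig, trace_sub, trace_mul_cycle, hSS, Matrix.mul_sub,
          Matrix.mul_one, trace_sub]
    _ = σ2 * (Sx * C⁻¹).trace := by
        rw [hproj, Matrix.mul_smul, trace_smul, smul_eq_mul]

theorem sum_inv_add_mul_sub_sum_div {ι : Type*} [Fintype ι] {lam : ι → ℝ} (q : ι → ℝ)
    (hlam : ∀ i, 0 ≤ lam i) {σ : ℝ} (hσ : σ ≠ 0) :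
    (σ * ∑ i, (σ + lam i)⁻¹ * q i - ∑ i ∈ Finset.univ.filter (fun i => lam i = 0), q i) / σ
      = ∑ i ∈ Finset.univ.filter (fun i => 0 < lam i), (σ + lam i)⁻¹ * q i := by
  have hpos : Finset.univ.filter (fun i => 0 < lam i) = Finset.univ.filter (fun i => lam i ≠ 0) :=
    Finset.filter_congr fun i _ => (hlam i).lt_iff_ne'
  have hzero : ∑ i ∈ Finset.univ.filter (fun i => lam i = 0), (σ + lam i)⁻¹ * q i
      = σ⁻¹ * ∑ i ∈ Finset.univ.filter (fun i => lam i = 0), q i := by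
    rw [Finset.mul_sum]
    exact Finset.sum_congr rfl fun i hi => by rw [(Finset.mem_filter.mp hi).2, add_zero]
  rw [hpos, ← Finset.sum_filter_add_sum_filter_not Finset.univ (fun i => lam i = 0), hzero]
  field_simp
  ring

theorem tendsto_sum_inv_add_mul {ι : Type*} (s : Finset ι) {lam : ι → ℝ} (q : ι → ℝ)
    (hs : ∀ i ∈ s, lam i ≠ 0) :
    Tendsto (fun σ : ℝ => ∑ i ∈ s, (σ + lam i)⁻¹ * q i) (𝓝 0) (𝓝 (∑ i ∈ s, (lam i)⁻¹ * q i)) :=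
  tendsto_finsetSum s fun i hi => by
    simpa using
      (((continuous_add_const (lam i)).tendsto 0).inv₀ (by simpa using hs i hi)).mul_const (q i)

/-- With an orthonormal eigenbasis (uᵢ, λᵢ) of Σ = Σ_x^{1/2}·Φᵀ·Φ·Σ_x^{1/2},
MMSE(σ²) = M_∞ + D·σ² + o(σ²) as σ² → 0⁺, where M_∞ = ∑_{i : λᵢ = 0} uᵢᵀ·Σ_x·uᵢ and
D = ∑_{i : λᵢ > 0} λᵢ⁻¹·uᵢᵀ·Σ_x·uᵢ; i.e. (MMSE(σ²) − M_∞)/σ² → D. -/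
theorem stmt_3 {n l : ℕ} (Sx : Matrix (Fin n) (Fin n) ℝ) (hSx : Sx.PosSemidef)
    (Φ : Matrix (Fin l) (Fin n) ℝ)
    (u : Fin n → Fin n → ℝ) (lam : Fin n → ℝ)
    (hortho : ∀ i j, u i ⬝ᵥ u j = if i = j then 1 else 0)
    (heig : ∀ i, (CFC.sqrt Sx * Φᵀ * Φ * CFC.sqrt Sx).mulVec (u i) = lam i • u i)
    (hnonneg : ∀ i, 0 ≤ lam i) :
    Tendsto (fun σ2 : ℝ =>
        ((Sx - Sx * Φᵀ * (σ2 • (1 : Matrix (Fin l) (Fin l) ℝ) + Φ * Sx * Φᵀ)⁻¹ * Φ * Sx).trace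
          - ∑ i ∈ Finset.univ.filter (fun i => lam i = 0), u i ⬝ᵥ Sx.mulVec (u i)) / σ2)
      (nhdsWithin 0 (Set.Ioi 0))
      (nhds (∑ i ∈ Finset.univ.filter (fun i => 0 < lam i),
        (lam i)⁻¹ * (u i ⬝ᵥ Sx.mulVec (u i)))) := by
  refine ((tendsto_sum_inv_add_mul _ _ fun i hi => (Finset.mem_filter.mp hi).2.ne').mono_left
    nhdsWithin_le_nhds).congr' ?_
  filter_upwards [self_mem_nhdsWithin] with σ2 (hσ2 : 0 < σ2)
  have hC := isUnit_det_smul_one_add (posSemidef_sqrt_mul_transpose_mul_mul_sqrt Sx Φ) hσ2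
  have hC_eig : ∀ i, (σ2 • 1 + CFC.sqrt Sx * Φᵀ * Φ * CFC.sqrt Sx) *ᵥ u i = (σ2 + lam i) • u i :=
    fun i => by rw [add_mulVec, smul_mulVec, one_mulVec, heig, add_smul]
  rw [← sum_inv_add_mul_sub_sum_div _ hnonneg hσ2.ne',
    ← trace_mul_inv_eq_sum_of_eigenbasis Sx _ hC u _ hortho hC_eig,
    ← gaussianMMSE_eq_mul_trace_mul_inv hSx Φ hσ2]
  rfl
end

section
/- Let Σ_x be a real n×n positive semidefinite matrix and Φ a real ℓ×n matrix. If MMSE(σ²) tends to 0 as σ² → 0⁺, then rank(Σ_x) ≤ ℓ. (Necessary condition on the number of measurements for perfect reconstruction of a Gaussian source in the low-noise regime.) -/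
/-!
If `rank Σ > ℓ`, the range of `Σ` meets `ker Φ` nontrivially, so some `v` has `Σ v ≠ 0` and
`Φ Σ v = 0`. For such `v` the error covariance satisfies `E(σ²) v = Σ v`, and `E(σ²)` is
positive semidefinite, being a Schur complement of the joint covariance of the source and the
measurements. Hence `(v ⬝ v) · tr E(σ²) ≥ v ⬝ Σ v > 0` for every `σ² > 0`, and the MMSE
cannot tend to `0`.
-/

open Matrix Filter
open scoped MatrixOrder

namespace Matrix

variable {m n p : Type*} [Fintype m] [Fintype n]

theorem PosSemidef.dotProduct_mulVec_le_dotProduct_mul_trace {P : Matrix n n ℝ}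
    (hP : P.PosSemidef) (u : n → ℝ) : u ⬝ᵥ P *ᵥ u ≤ (u ⬝ᵥ u) * P.trace := by
  classical
  obtain ⟨B, rfl⟩ := CStarAlgebra.nonneg_iff_eq_star_mul_self.mp hP.nonneg
  have hquad : u ⬝ᵥ (star B * B) *ᵥ u = ∑ i, (∑ j, B i j * u j) ^ 2 := by
    rw [star_eq_conjTranspose, conjTranspose_eq_transpose_of_trivial, ← mulVec_mulVec,
      dotProduct_mulVec, vecMul_transpose]
    simp [dotProduct, mulVec, sq]
  have htrace : (star B * B).trace = ∑ i, ∑ j, B i j ^ 2 := by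
    simp only [star_eq_conjTranspose, conjTranspose_eq_transpose_of_trivial, trace, diag_apply,
      mul_apply, transpose_apply]
    rw [Finset.sum_comm]
    simp [sq]
  rw [hquad, htrace, Finset.mul_sum]
  refine Finset.sum_le_sum fun i _ => ?_
  calc (∑ j, B i j * u j) ^ 2 ≤ (∑ j, B i j ^ 2) * ∑ j, u j ^ 2 :=
        Finset.sum_mul_sq_le_sq_mul_sq _ _ _
    _ = (u ⬝ᵥ u) * ∑ j, B i j ^ 2 := by simp [dotProduct, sq, mul_comm]

variable {K : Type*} [Field K]

theorem exists_mulVec_ne_zero_and_mulVec_mulVec_eq_zero [Fintype p] (S : Matrix n p K)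
    (Φ : Matrix m n K) (h : Fintype.card m < S.rank) :
    ∃ v, S *ᵥ v ≠ 0 ∧ Φ *ᵥ (S *ᵥ v) = 0 := by
  let f := Φ.mulVecLin.domRestrict (LinearMap.range S.mulVecLin)
  have hker : LinearMap.ker f ≠ ⊥ :=
    LinearMap.ker_ne_bot_of_finrank_lt (by simpa [rank] using h)
  obtain ⟨⟨_, v, rfl⟩, hw, hw0⟩ := (Submodule.ne_bot_iff _).mp hker
  exact ⟨v, by simpa using hw0, by simpa [f] using hw⟩

end Matrix

variable {m n : Type*} [Fintype m] [Fintype n] [DecidableEq m]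

noncomputable def mmseErrorCov (S : Matrix n n ℝ) (Φ : Matrix m n ℝ) (σ2 : ℝ) : Matrix n n ℝ :=
  S - S * Φᵀ * (σ2 • 1 + Φ * S * Φᵀ)⁻¹ * Φ * S

theorem mmseErrorCov_mulVec_of_mulVec_mulVec_eq_zero (S : Matrix n n ℝ) (Φ : Matrix m n ℝ)
    (σ2 : ℝ) {v : n → ℝ} (hv : Φ *ᵥ (S *ᵥ v) = 0) : mmseErrorCov S Φ σ2 *ᵥ v = S *ᵥ v := by
  rw [mmseErrorCov, sub_mulVec, ← mulVec_mulVec, ← mulVec_mulVec, hv, mulVec_zero, sub_zero]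

theorem posSemidef_mmseErrorCov [DecidableEq n] {S : Matrix n n ℝ} (hS : S.PosSemidef)
    (Φ : Matrix m n ℝ) {σ2 : ℝ} (hσ2 : 0 < σ2) : (mmseErrorCov S Φ σ2).PosSemidef := by
  have hSt : Sᵀ = S := by simpa using hS.isHermitian.eq
  have hD : (σ2 • (1 : Matrix m m ℝ) + Φ * S * Φᵀ).PosDef := by
    refine PosDef.add_posSemidef ?_ ?_
    · rw [smul_one_eq_diagonal]
      exact posDef_diagonal_iff.mpr fun _ => hσ2
    · simpa using hS.mul_mul_conjTranspose_same Φ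
  have := hD.isUnit.invertible
  -- the joint covariance of `x` and `y = Φ x + noise`
  have hBlocks : (fromBlocks S (S * Φᵀ) (Φ * S) (σ2 • 1 + Φ * S * Φᵀ)).PosSemidef := by
    have h1 := hS.conjTranspose_mul_mul_same (fromCols (1 : Matrix n n ℝ) Φᵀ)
    have h2 : (fromBlocks (0 : Matrix n n ℝ) 0 0 (σ2 • (1 : Matrix m m ℝ))).PosSemidef := by
      rw [← diagonal_zero, smul_one_eq_diagonal, fromBlocks_diagonal]
      exact posSemidef_diagonal_iff.mpr fun i => by cases i <;> simp [hσ2.le]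
    convert h1.add h2 using 1
    rw [conjTranspose_fromCols_eq_fromRows_conjTranspose, fromRows_mul, fromRows_mul_fromCols,
      fromBlocks_add]
    simp [add_comm]
  have := (PosDef.fromBlocks₂₂ S (S * Φᵀ) hD).mp (by simpa [hSt] using hBlocks)
  simpa [mmseErrorCov, hSt, Matrix.mul_assoc] using this

theorem dotProduct_mulVec_le_mul_trace_mmseErrorCov [DecidableEq n] {S : Matrix n n ℝ}
    (hS : S.PosSemidef) (Φ : Matrix m n ℝ) {σ2 : ℝ} (hσ2 : 0 < σ2) {v : n → ℝ}
    (hv : Φ *ᵥ (S *ᵥ v) = 0) : v ⬝ᵥ S *ᵥ v ≤ (v ⬝ᵥ v) * (mmseErrorCov S Φ σ2).trace := by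
  rw [← mmseErrorCov_mulVec_of_mulVec_mulVec_eq_zero S Φ σ2 hv]
  exact (posSemidef_mmseErrorCov hS Φ hσ2).dotProduct_mulVec_le_dotProduct_mul_trace v

/-- If MMSE(σ²) → 0 as σ² → 0⁺, then rank(Σ_x) ≤ ℓ. -/
theorem stmt_6 {n l : ℕ} (Sx : Matrix (Fin n) (Fin n) ℝ) (hSx : Sx.PosSemidef)
    (Φ : Matrix (Fin l) (Fin n) ℝ)
    (h : Tendsto (fun σ2 : ℝ =>
        (Sx - Sx * Φᵀ * (σ2 • (1 : Matrix (Fin l) (Fin l) ℝ) + Φ * Sx * Φᵀ)⁻¹ * Φ * Sx).trace)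
      (nhdsWithin 0 (Set.Ioi 0)) (nhds 0)) :
    Sx.rank ≤ l := by
  by_contra! hrank
  obtain ⟨v, hSv, hΦSv⟩ :=
    Sx.exists_mulVec_ne_zero_and_mulVec_mulVec_eq_zero Φ (by simpa using hrank)
  have hle : v ⬝ᵥ Sx *ᵥ v ≤ 0 := by
    have hlim := h.const_mul (v ⬝ᵥ v)
    rw [mul_zero] at hlim
    exact ge_of_tendsto hlim <| eventually_nhdsWithin_of_forall fun σ2 hσ2 =>
      dotProduct_mulVec_le_mul_trace_mmseErrorCov hSx Φ hσ2 hΦSv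
  have hzero : v ⬝ᵥ Sx *ᵥ v = 0 :=
    le_antisymm hle (by simpa using hSx.dotProduct_mulVec_nonneg v)
  exact hSv ((hSx.dotProduct_mulVec_zero_iff v).mp (by simpa using hzero))
end

section
/- Let B be a real n×n positive semidefinite matrix, x ∈ ℝⁿ, and Φ a real ℓ×n matrix. If rank(Φ·(B + x·xᵀ)·Φᵀ) = rank(B) + 1, then Φ·x ∉ range(Φ·B·Φᵀ), where range denotes the column space. -/
/-! Adding a rank-one term `u uᵀ` with `u ∈ range A` cannot enlarge the range of `A`. With
`A = Φ B Φᵀ` and `u = Φ x`, the hypothesis `Φ x ∈ range (Φ B Φᵀ)` would therefore give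
`rank (Φ (B + x xᵀ) Φᵀ) ≤ rank (Φ B Φᵀ) ≤ rank B`. -/

open Matrix

namespace Matrix

variable {R l m n : Type*} [Fintype n]

theorem mul_vecMulVec_mul_transpose [CommSemiring R] [Fintype l] (Φ : Matrix m l R)
    (x : l → R) : Φ * vecMulVec x x * Φᵀ = vecMulVec (Φ *ᵥ x) (Φ *ᵥ x) := by
  rw [mul_vecMulVec, vecMulVec_mul, vecMul_transpose]

theorem range_mulVecLin_add_vecMulVec_le [CommSemiring R] {A : Matrix m n R} {u : m → R}
    (hu : u ∈ LinearMap.range A.mulVecLin) (w : n → R) :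
    LinearMap.range (A + vecMulVec u w).mulVecLin ≤ LinearMap.range A.mulVecLin := by
  rintro _ ⟨z, rfl⟩
  obtain ⟨y, rfl⟩ := hu
  refine ⟨z + (w ⬝ᵥ z) • y, ?_⟩
  simp only [mulVecLin_apply, add_mulVec, vecMulVec_mulVec, mulVec_add, mulVec_smul,
    op_smul_eq_smul]

theorem rank_add_vecMulVec_le [CommRing R] [StrongRankCondition R] [Fintype m]
    {A : Matrix m n R} {u : m → R} (hu : u ∈ LinearMap.range A.mulVecLin) (w : n → R) :
    (A + vecMulVec u w).rank ≤ A.rank :=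
  Submodule.finrank_mono (range_mulVecLin_add_vecMulVec_le hu w)

end Matrix

theorem stmt_10_general {n l : ℕ} (B : Matrix (Fin n) (Fin n) ℝ)
    (x : Fin n → ℝ) (Φ : Matrix (Fin l) (Fin n) ℝ)
    (h : (Φ * (B + Matrix.vecMulVec x x) * Φᵀ).rank = B.rank + 1) :
    Φ.mulVec x ∉ LinearMap.range (Φ * B * Φᵀ).mulVecLin := by
  intro hx
  have h_le := rank_add_vecMulVec_le hx (Φ *ᵥ x)
  rw [← mul_vecMulVec_mul_transpose, ← Matrix.add_mul, ← Matrix.mul_add, h] at h_le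
  have h_compress : (Φ * B * Φᵀ).rank ≤ B.rank :=
    (rank_mul_le_left _ _).trans (rank_mul_le_right Φ B)
  omega

/-- For positive semidefinite B, x ∈ ℝⁿ and Φ an ℓ×n matrix, if
rank(Φ·(B + x·xᵀ)·Φᵀ) = rank(B) + 1 then Φ·x ∉ range(Φ·B·Φᵀ). -/
theorem stmt_10 {n l : ℕ} (B : Matrix (Fin n) (Fin n) ℝ) (hB : B.PosSemidef)
    (x : Fin n → ℝ) (Φ : Matrix (Fin l) (Fin n) ℝ)
    (h : (Φ * (B + Matrix.vecMulVec x x) * Φᵀ).rank = B.rank + 1) :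
    Φ.mulVec x ∉ LinearMap.range (Φ * B * Φᵀ).mulVecLin :=
  stmt_10_general B x Φ h
end

section
/- Let n ≥ ℓ ≥ 1, let U be a real n×n orthogonal matrix, let λ₁ ≥ λ₂ ≥ … ≥ λ_s > 0 and λᵢ = 0 for i > s, and set Σ_x = U·diag(λ₁,…,λ_n)·Uᵀ and ℓ' = min(ℓ, s). Let Φ be the ℓ×n matrix Φ = [diag(√d₁,…,√d_ℓ) 0_{ℓ×(n−ℓ)}]·Uᵀ with dᵢ = ℓ/ℓ' for i ≤ ℓ' and dᵢ = 0 for ℓ' < i ≤ ℓ. Then lim_{σ²→0⁺} (MMSE(σ²) − Σ_{i=ℓ'+1}^{s} λᵢ)/σ² = (ℓ')²/ℓ; that is, MMSE(σ²) = Σ_{i=ℓ'+1}^{s} λᵢ + ((ℓ')²/ℓ)·σ² + o(σ²) as σ² → 0⁺. -/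
open Matrix Filter Topology

/-! Conjugating by the orthogonal `U` does not change the MMSE, which reduces the problem to
`Σ = diag λ` and `Φ = diag (√d) · P`, where `P` keeps the first `ℓ` coordinates. Then `Φ Σ Φᵀ`
is diagonal, so the MMSE splits into scalar channels:
`MMSE(σ²) = ∑ⱼ λⱼ - ∑ᵢ dᵢ λᵢ² / (σ² + dᵢ λᵢ)`. The nonzero eigenvalues beyond `ℓ'` are not
observed and contribute the constant `∑_{ℓ' < i ≤ s} λᵢ`; each of the `ℓ'` observed ones
contributes `σ² λⱼ / (σ² + (ℓ/ℓ') λⱼ) = (ℓ'/ℓ) σ² + o(σ²)`. -/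

noncomputable def mmse {ι κ : Type*} [Fintype ι] [Fintype κ] [DecidableEq κ]
    (S : Matrix ι ι ℝ) (Φ : Matrix κ ι ℝ) (σ2 : ℝ) : ℝ :=
  (S - S * Φᵀ * (σ2 • (1 : Matrix κ κ ℝ) + Φ * S * Φᵀ)⁻¹ * Φ * S).trace

section
variable {ι κ : Type*} [Fintype ι] [Fintype κ] [DecidableEq κ]

theorem mmse_eq_trace_sub_trace (S : Matrix ι ι ℝ) (Φ : Matrix κ ι ℝ) (σ2 : ℝ) :
    mmse S Φ σ2
      = S.trace - ((σ2 • (1 : Matrix κ κ ℝ) + Φ * S * Φᵀ)⁻¹ * (Φ * (S * S) * Φᵀ)).trace := by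
  set M := σ2 • (1 : Matrix κ κ ℝ) + Φ * S * Φᵀ
  rw [mmse, trace_sub, show S * Φᵀ * M⁻¹ * Φ * S = S * Φᵀ * (M⁻¹ * Φ * S) by
    simp only [Matrix.mul_assoc], trace_mul_comm]
  simp only [Matrix.mul_assoc]

variable [DecidableEq ι]

theorem mmse_conj_of_orthogonal {U : Matrix ι ι ℝ} (hU : Uᵀ * U = 1) (S : Matrix ι ι ℝ)
    (Φ : Matrix κ ι ℝ) (σ2 : ℝ) : mmse (U * S * Uᵀ) (Φ * Uᵀ) σ2 = mmse S Φ σ2 := by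
  have hgram : Φ * Uᵀ * (U * S * Uᵀ) * (Φ * Uᵀ)ᵀ = Φ * S * Φᵀ := by
    simp only [transpose_mul, transpose_transpose, Matrix.mul_assoc]
    simp only [← Matrix.mul_assoc Uᵀ U, hU, Matrix.one_mul]
  have hconj : U * S * Uᵀ
        - U * S * Uᵀ * (Φ * Uᵀ)ᵀ * (σ2 • 1 + Φ * S * Φᵀ)⁻¹ * (Φ * Uᵀ) * (U * S * Uᵀ)
      = U * (S - S * Φᵀ * (σ2 • 1 + Φ * S * Φᵀ)⁻¹ * Φ * S) * Uᵀ := by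
    simp only [transpose_mul, transpose_transpose, Matrix.mul_assoc, Matrix.mul_sub,
      Matrix.sub_mul]
    simp only [← Matrix.mul_assoc Uᵀ U, hU, Matrix.one_mul]
  rw [mmse, mmse, hgram, hconj, trace_mul_cycle, hU, Matrix.one_mul]

theorem diagonal_mul_submatrix_one_mul_diagonal_mul_transpose {e : κ → ι}
    (he : Function.Injective e) (r : κ → ℝ) (f : ι → ℝ) :
    diagonal r * (1 : Matrix ι ι ℝ).submatrix e id * diagonal f *
        (diagonal r * (1 : Matrix ι ι ℝ).submatrix e id)ᵀ
      = diagonal (fun i => r i ^ 2 * f (e i)) := by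
  ext i j
  simp only [transpose_mul, transpose_submatrix, transpose_one, diagonal_transpose, mul_apply,
    diagonal_apply, submatrix_apply, one_apply, id_eq, mul_ite, mul_one, mul_zero,
    Finset.sum_ite_eq', Finset.mem_univ, ↓reduceIte, ite_mul, one_mul, zero_mul, he.eq_iff]
  split_ifs with h
  · subst h; ring
  · rfl

theorem mmse_diagonal_diagonal_mul_submatrix_one {e : κ → ι} (he : Function.Injective e)
    (r : κ → ℝ) {lam : ι → ℝ} (hlam : ∀ j, 0 ≤ lam j) {σ2 : ℝ} (hσ2 : 0 < σ2) :
    mmse (diagonal lam) (diagonal r * (1 : Matrix ι ι ℝ).submatrix e id) σ2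
      = ∑ j, lam j - ∑ i, r i ^ 2 * lam (e i) ^ 2 / (σ2 + r i ^ 2 * lam (e i)) := by
  have hM : σ2 • (1 : Matrix κ κ ℝ) + diagonal (fun i => r i ^ 2 * lam (e i))
      = diagonal (fun i => σ2 + r i ^ 2 * lam (e i)) := by
    rw [smul_one_eq_diagonal, diagonal_add]
  have hinv : (diagonal (fun i => σ2 + r i ^ 2 * lam (e i)))⁻¹
      = diagonal (fun i => (σ2 + r i ^ 2 * lam (e i))⁻¹) := by
    apply inv_eq_left_inv
    rw [diagonal_mul_diagonal, ← diagonal_one]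
    congr 1; ext i
    exact inv_mul_cancel₀ (add_pos_of_pos_of_nonneg hσ2 (mul_nonneg (sq_nonneg _) (hlam _))).ne'
  rw [mmse_eq_trace_sub_trace, diagonal_mul_diagonal,
    diagonal_mul_submatrix_one_mul_diagonal_mul_transpose he,
    diagonal_mul_submatrix_one_mul_diagonal_mul_transpose he, hM, hinv, diagonal_mul_diagonal,
    trace_diagonal, trace_diagonal]
  congr 1; refine Finset.sum_congr rfl fun i _ => ?_
  rw [div_eq_inv_mul]; ring

end

theorem Fin.sum_castLE_ite_lt {M : Type*} [AddCommMonoid M] {k l n : ℕ} (hkl : k ≤ l)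
    (hln : l ≤ n) (g : Fin n → M) :
    ∑ i : Fin l, (if (i : ℕ) < k then g (Fin.castLE hln i) else 0)
      = ∑ j : Fin n, if (j : ℕ) < k then g j else 0 := by
  refine Fintype.sum_of_injective _ (Fin.castLE_injective hln) _ _ (fun j hj => ?_)
    (fun i => rfl)
  rw [Fin.range_castLE] at hj
  exact if_neg fun hjk => hj (hjk.trans_le hkl)

theorem Fin.sum_eq_sum_lt_add_sum_Ico {M : Type*} [AddCommMonoid M] {n s : ℕ} (k : ℕ)
    (f : Fin n → M) (hf : ∀ j : Fin n, s ≤ (j : ℕ) → f j = 0) :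
    ∑ j, f j = ∑ j ∈ Finset.univ.filter (fun j : Fin n => (j : ℕ) < k), f j
      + ∑ j ∈ Finset.univ.filter (fun j : Fin n => k ≤ (j : ℕ) ∧ (j : ℕ) < s), f j := by
  rw [← Finset.sum_filter_add_sum_filter_not _ (fun j : Fin n => (j : ℕ) < k)]
  congr 1
  rw [← Finset.filter_filter, Finset.sum_filter_of_ne fun j _ hj => not_le.mp (mt (hf j) hj)]
  simp only [not_lt]

theorem Matrix.of_ite_val_eq_diagonal_mul_submatrix_one {l n : ℕ} (hln : l ≤ n) (r : Fin l → ℝ) :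
    of (fun (i : Fin l) (j : Fin n) => if (j : ℕ) = i then r i else 0)
      = diagonal r * (1 : Matrix (Fin n) (Fin n) ℝ).submatrix (Fin.castLE hln) id := by
  ext i j
  simp [diagonal_mul, one_apply, Fin.ext_iff, eq_comm]

theorem mmse_diagonal_of_kernel_first_coords {k l n s : ℕ} (hkl : k ≤ l) (hln : l ≤ n)
    {lam : Fin n → ℝ} (hlam : ∀ j, 0 ≤ lam j) (hzero : ∀ j : Fin n, s ≤ (j : ℕ) → lam j = 0)
    {c : ℝ} (hc : 0 ≤ c) {d : Fin l → ℝ} (hd : ∀ i : Fin l, d i = if (i : ℕ) < k then c else 0)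
    {σ2 : ℝ} (hσ2 : 0 < σ2) :
    mmse (diagonal lam)
        (of fun (i : Fin l) (j : Fin n) => if (j : ℕ) = i then √(d i) else 0) σ2
      = σ2 * ∑ j ∈ Finset.univ.filter (fun j : Fin n => (j : ℕ) < k),
          lam j / (σ2 + c * lam j)
        + ∑ j ∈ Finset.univ.filter (fun j : Fin n => k ≤ (j : ℕ) ∧ (j : ℕ) < s), lam j := by
  have hgain : ∑ i : Fin l, √(d i) ^ 2 * lam (Fin.castLE hln i) ^ 2
      / (σ2 + √(d i) ^ 2 * lam (Fin.castLE hln i))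
        = ∑ j ∈ Finset.univ.filter (fun j : Fin n => (j : ℕ) < k),
            c * lam j ^ 2 / (σ2 + c * lam j) := by
    rw [Finset.sum_filter, ← Fin.sum_castLE_ite_lt hkl hln]
    refine Finset.sum_congr rfl fun i _ => ?_
    have hdi := hd i
    split_ifs at hdi ⊢ <;> rw [hdi, Real.sq_sqrt (by positivity)]
    simp
  rw [of_ite_val_eq_diagonal_mul_submatrix_one hln,
    mmse_diagonal_diagonal_mul_submatrix_one (Fin.castLE_injective hln) _ hlam hσ2, hgain,
    Fin.sum_eq_sum_lt_add_sum_Ico k lam hzero, add_sub_right_comm, ← Finset.sum_sub_distrib,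
    Finset.mul_sum]
  congr 1
  refine Finset.sum_congr rfl fun j _ => ?_
  have : σ2 + c * lam j ≠ 0 := (add_pos_of_pos_of_nonneg hσ2 (mul_nonneg hc (hlam j))).ne'
  rw [mul_div_assoc', eq_div_iff this, sub_mul, div_mul_cancel₀ _ this]
  ring

theorem tendsto_sum_div_add_mul {α : Type*} (P : Finset α) {lam : α → ℝ} {c : ℝ}
    (h : ∀ j ∈ P, c * lam j ≠ 0) :
    Tendsto (fun x : ℝ => ∑ j ∈ P, lam j / (x + c * lam j)) (𝓝 0) (𝓝 (P.card / c)) := by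
  have hterm : ∀ j ∈ P, lam j / (0 + c * lam j) = c⁻¹ := fun j hj => by
    rw [zero_add, div_mul_cancel_right₀ (right_ne_zero_of_mul (h j hj))]
  have := tendsto_finsetSum (f := fun j x => lam j / (x + c * lam j)) P fun j hj =>
    tendsto_const_nhds.div ((tendsto_id (x := 𝓝 0)).add tendsto_const_nhds)
      (by rw [zero_add]; exact h j hj)
  rwa [Finset.sum_congr rfl hterm, Finset.sum_const, nsmul_eq_mul, ← div_eq_mul_inv] at this

theorem stmt_12_general {n l s : ℕ} (hln : l ≤ n)
    (U : Matrix (Fin n) (Fin n) ℝ) (hU : Uᵀ * U = 1)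
    (lam : Fin n → ℝ)
    (hpos : ∀ i : Fin n, (i : ℕ) < s → 0 < lam i)
    (hzero : ∀ i : Fin n, s ≤ (i : ℕ) → lam i = 0)
    (Sx : Matrix (Fin n) (Fin n) ℝ) (hSx : Sx = U * Matrix.diagonal lam * Uᵀ)
    (d : Fin l → ℝ)
    (hd : ∀ i : Fin l, d i = if (i : ℕ) < min l s then (l : ℝ) / (min l s : ℝ) else 0)
    (Φ : Matrix (Fin l) (Fin n) ℝ)
    (hΦ : Φ = (Matrix.of fun (i : Fin l) (j : Fin n) =>
        if (j : ℕ) = (i : ℕ) then Real.sqrt (d i) else 0) * Uᵀ) :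
    Tendsto (fun σ2 : ℝ =>
        ((Sx - Sx * Φᵀ * (σ2 • (1 : Matrix (Fin l) (Fin l) ℝ) + Φ * Sx * Φᵀ)⁻¹ * Φ * Sx).trace
          - ∑ i ∈ Finset.univ.filter (fun i : Fin n => min l s ≤ (i : ℕ) ∧ (i : ℕ) < s), lam i)
          / σ2)
      (nhdsWithin 0 (Set.Ioi 0)) (nhds ((min l s : ℝ) ^ 2 / (l : ℝ))) := by
  -- `(min l s : ℝ)` elaborates to `min (l : ℝ) (s : ℝ)`
  rw [← Nat.cast_min] at hd ⊢
  set k := min l s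
  set c : ℝ := l / k
  set P := Finset.univ.filter (fun j : Fin n => (j : ℕ) < k)
  have hkl : k ≤ l := min_le_left l s
  have hlam : ∀ j, 0 ≤ lam j := fun j =>
    (lt_or_ge (j : ℕ) s).elim (fun h => (hpos j h).le) (fun h => (hzero j h).ge)
  have hcP : ∀ j ∈ P, 0 < c * lam j := fun j hj => by
    have hjk : (j : ℕ) < k := (Finset.mem_filter.mp hj).2
    have : (0 : ℝ) < l := by exact_mod_cast (j.val.zero_le.trans_lt hjk).trans_le hkl
    have : (0 : ℝ) < k := by exact_mod_cast j.val.zero_le.trans_lt hjk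
    have := hpos j (hjk.trans_le (min_le_right l s))
    positivity
  have hexcess : ∀ σ2 > 0, (mmse Sx Φ σ2 - ∑ j ∈ Finset.univ.filter
      (fun j : Fin n => k ≤ (j : ℕ) ∧ (j : ℕ) < s), lam j) / σ2
        = ∑ j ∈ P, lam j / (σ2 + c * lam j) := by
    intro σ2 hσ2
    rw [hSx, hΦ, mmse_conj_of_orthogonal hU,
      mmse_diagonal_of_kernel_first_coords hkl hln hlam hzero (by positivity) hd hσ2,
      add_sub_cancel_right, mul_div_cancel_left₀ _ hσ2.ne']
  have hvalue : (P.card : ℝ) / c = (k : ℝ) ^ 2 / l := by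
    rw [Fin.card_filter_val_lt, min_eq_right (hkl.trans hln), div_div_eq_mul_div, sq]
  rw [← hvalue]
  exact ((tendsto_sum_div_add_mul P fun j hj => (hcP j hj).ne').mono_left
    nhdsWithin_le_nhds).congr' (eventually_nhdsWithin_of_forall fun σ2 hσ2 => (hexcess σ2 hσ2).symm)

/-- With Σ_x = U·diag(λ)·Uᵀ, λ₁ ≥ … ≥ λ_s > 0, λᵢ = 0 for i > s,
ℓ' = min(ℓ, s), and the designed kernel Φ = [diag(√d) 0]·Uᵀ with dᵢ = ℓ/ℓ' for i ≤ ℓ'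
and dᵢ = 0 otherwise, we have MMSE(σ²) = ∑_{i=ℓ'+1}^{s} λᵢ + ((ℓ')²/ℓ)·σ² + o(σ²) as
σ² → 0⁺, i.e. (MMSE(σ²) − ∑_{i=ℓ'+1}^{s} λᵢ)/σ² → (ℓ')²/ℓ. -/
theorem stmt_12 {n l s : ℕ} (hl : 1 ≤ l) (hln : l ≤ n) (hs : s ≤ n)
    (U : Matrix (Fin n) (Fin n) ℝ) (hU : Uᵀ * U = 1)
    (lam : Fin n → ℝ)
    (hmono : ∀ i j : Fin n, i ≤ j → lam j ≤ lam i)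
    (hpos : ∀ i : Fin n, (i : ℕ) < s → 0 < lam i)
    (hzero : ∀ i : Fin n, s ≤ (i : ℕ) → lam i = 0)
    (Sx : Matrix (Fin n) (Fin n) ℝ) (hSx : Sx = U * Matrix.diagonal lam * Uᵀ)
    (d : Fin l → ℝ)
    (hd : ∀ i : Fin l, d i = if (i : ℕ) < min l s then (l : ℝ) / (min l s : ℝ) else 0)
    (Φ : Matrix (Fin l) (Fin n) ℝ)
    (hΦ : Φ = (Matrix.of fun (i : Fin l) (j : Fin n) =>
        if (j : ℕ) = (i : ℕ) then Real.sqrt (d i) else 0) * Uᵀ) :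
    Tendsto (fun σ2 : ℝ =>
        ((Sx - Sx * Φᵀ * (σ2 • (1 : Matrix (Fin l) (Fin l) ℝ) + Φ * Sx * Φᵀ)⁻¹ * Φ * Sx).trace
          - ∑ i ∈ Finset.univ.filter (fun i : Fin n => min l s ≤ (i : ℕ) ∧ (i : ℕ) < s), lam i)
          / σ2)
      (nhdsWithin 0 (Set.Ioi 0)) (nhds ((min l s : ℝ) ^ 2 / (l : ℝ))) :=
  stmt_12_general hln U hU lam hpos hzero Sx hSx d hd Φ hΦ
end

section
/- Let A be a fixed real n×m matrix, and let Φ be a random ℓ×n matrix whose entries are independent standard Gaussian random variables, i.e., Φ is distributed according to the product measure on ℝ^{{1,…,ℓ}×{1,…,n}} in which each coordinate has the standard Gaussian distribution N(0,1) on ℝ. Then, for almost every Φ with respect to this measure, rank(Φ·A) = min(ℓ, rank(A)). -/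
/-!
Every minor of `Φ * A` is a polynomial in the entries of `Φ`. The zero set of a nonzero real
polynomial is null for any product of atomless measures: by Fubini, a fibre of it in one
variable is the root set of a nonzero univariate polynomial, hence finite, as soon as the leading
coefficient does not vanish, which by induction happens almost surely. Choosing for `Φ₀` the
selection of `k = min ℓ (rank A)` independent rows of `A`, some `k × k` minor of `Φ₀ * A` is
nonzero, so the same minor of `Φ * A` is nonzero almost surely and `rank (Φ * A) ≥ k`; the reverse
inequality is trivial.
-/

open MeasureTheory ProbabilityTheory

namespace MvPolynomial

theorem ae_eval_ne_zero_fin : ∀ {k : ℕ} (μ : Fin k → Measure ℝ) [∀ i, SigmaFinite (μ i)]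
    [∀ i, NullSingletonClass (μ i)] {p : MvPolynomial (Fin k) ℝ}, p ≠ 0 →
    ∀ᵐ x ∂Measure.pi μ, eval x p ≠ 0
  | 0, μ, _, _, p, hp => by
    obtain ⟨a, rfl⟩ := C_surjective (Fin 0) p
    exact .of_forall fun x => by simpa using hp
  | k + 1, μ, _, _, p, hp => by
    set q := finSuccEquiv ℝ k p
    have hq : q.leadingCoeff ≠ 0 :=
      Polynomial.leadingCoeff_ne_zero.mpr ((EmbeddingLike.map_ne_zero_iff).mpr hp)
    let S : Set (ℝ × (Fin k → ℝ)) := {yx | eval (Fin.cons yx.1 yx.2) p = 0}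
    have hS : MeasurableSet S :=
      measurableSet_eq_fun ((continuous_eval p).measurable.comp (by fun_prop)) measurable_const
    have hpre : MeasurableEquiv.piFinSuccAbove (fun _ => ℝ) 0 ⁻¹' S = {x | eval x p = 0} := by
      ext x
      simp [S, MeasurableEquiv.piFinSuccAbove_apply]
    have hslice :
        ∀ᵐ x ∂Measure.pi (fun j => μ (Fin.succ j)), μ 0 ((·, x) ⁻¹' S) = 0 := by
      filter_upwards [ae_eval_ne_zero_fin (fun j => μ (Fin.succ j)) hq] with x hx
      have hmap : Polynomial.map (eval x) q ≠ 0 := fun h => hx <| by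
        simpa [h] using (Polynomial.coeff_map (p := q) (eval x) q.natDegree).symm
      have hroots : (·, x) ⁻¹' S = {y | (Polynomial.map (eval x) q).IsRoot y} := by
        ext y
        simp [S, q, eval_eq_eval_mv_eval']
      rw [hroots]
      exact (Polynomial.finite_setOfPred_isRoot hmap).measure_zero _
    rw [ae_iff]
    simp only [ne_eq, not_not]
    rw [← hpre, (measurePreserving_piFinSuccAbove μ 0).measure_preimage hS.nullMeasurableSet,
      Measure.prod_apply_symm hS]
    exact (lintegral_congr_ae hslice).trans lintegral_zero

theorem ae_eval_ne_zero {ι : Type*} [Fintype ι] (μ : ι → Measure ℝ)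
    [∀ i, SigmaFinite (μ i)] [∀ i, NullSingletonClass (μ i)] {p : MvPolynomial ι ℝ}
    (hp : p ≠ 0) :
    ∀ᵐ x ∂Measure.pi μ, eval x p ≠ 0 := by
  let e := (Fintype.equivFin ι).symm
  have hp' : rename e.symm p ≠ 0 :=
    ((rename_injective _ e.symm.injective).ne_iff' (map_zero _)).mpr hp
  filter_upwards [(measurePreserving_piCongrLeft μ e).symm.quasiMeasurePreserving.ae
    (ae_eval_ne_zero_fin (fun i => μ (e i)) hp')] with x hx
  have hsymm : (MeasurableEquiv.piCongrLeft (fun _ => ℝ) e).symm x = x ∘ e := rfl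
  simpa [hsymm, eval_rename, Function.comp_def] using hx

end MvPolynomial

namespace Matrix

variable {K : Type*} [Field K] {m n : Type*} [Fintype m] [Fintype n]

theorem exists_linearIndependent_rows_of_le_rank (A : Matrix m n K) {k : ℕ} (hk : k ≤ A.rank) :
    ∃ ρ : Fin k → m, LinearIndependent K (A.submatrix ρ id).row := by
  obtain ⟨κ, a, ha, hspan, hli⟩ := exists_linearIndependent' K A.row
  have : Fintype κ := Fintype.ofInjective a ha
  have hcard : k ≤ Fintype.card κ := by
    rwa [A.rank_eq_finrank_span_row, ← hspan, finrank_span_eq_card hli] at hk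
  obtain ⟨e⟩ : Nonempty (Fin k ↪ κ) :=
    Function.Embedding.nonempty_of_card_le (by simpa using hcard)
  exact ⟨a ∘ e, hli.comp e e.injective⟩

theorem exists_submatrix_det_ne_zero_of_le_rank (A : Matrix m n K) {k : ℕ} (hk : k ≤ A.rank) :
    ∃ (ρ : Fin k → m) (γ : Fin k → n), (A.submatrix ρ γ).det ≠ 0 := by
  obtain ⟨ρ, hρ⟩ := A.exists_linearIndependent_rows_of_le_rank hk
  have hrank : k ≤ (A.submatrix ρ id)ᵀ.rank := by
    rw [rank_transpose, hρ.rank_matrix, Fintype.card_fin]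
  obtain ⟨γ, hγ⟩ := (A.submatrix ρ id)ᵀ.exists_linearIndependent_rows_of_le_rank hrank
  exact ⟨ρ, γ,
    ((isUnit_iff_isUnit_det _).mp (linearIndependent_cols_iff_isUnit.mp hγ)).ne_zero⟩

theorem exists_min_le_rank_mul (A : Matrix m n K) (l : ℕ) :
    ∃ Φ : Matrix (Fin l) m K, min l A.rank ≤ (Φ * A).rank := by
  classical
  obtain ⟨ρ, hρ⟩ := A.exists_linearIndependent_rows_of_le_rank (min_le_right l A.rank)
  let Φ : Matrix (Fin l) m K := of fun i =>
    if h : (i : ℕ) < min l A.rank then Pi.single (ρ ⟨i, h⟩) 1 else 0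
  have hΦ : (Φ * A).submatrix (Fin.castLE (min_le_left _ _)) id = A.submatrix ρ id := by
    ext i j
    simp only [Φ, submatrix_apply, mul_apply, of_apply, Fin.val_castLE, Fin.eta, dif_pos i.isLt]
    simp [Pi.single_apply]
  refine ⟨Φ, ?_⟩
  calc min l A.rank = (A.submatrix ρ id).rank := by rw [hρ.rank_matrix, Fintype.card_fin]
    _ ≤ (Φ * A).rank := hΦ ▸ rank_submatrix_le _ _ _

theorem ae_le_rank_map_eval {σ m n : Type*} [Fintype σ] [Fintype m] [Fintype n]
    (μ : σ → Measure ℝ) [∀ i, SigmaFinite (μ i)] [∀ i, NullSingletonClass (μ i)]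
    (M : Matrix m n (MvPolynomial σ ℝ)) {k : ℕ} (x₀ : σ → ℝ)
    (hk : k ≤ (M.map (MvPolynomial.eval x₀)).rank) :
    ∀ᵐ x ∂Measure.pi μ, k ≤ (M.map (MvPolynomial.eval x)).rank := by
  classical
  obtain ⟨ρ, γ, hdet⟩ := exists_submatrix_det_ne_zero_of_le_rank _ hk
  have heval : ∀ x, MvPolynomial.eval x (M.submatrix ρ γ).det
      = ((M.map (MvPolynomial.eval x)).submatrix ρ γ).det := fun x => by
    rw [RingHom.map_det, submatrix_map]; rfl
  have hP : (M.submatrix ρ γ).det ≠ 0 := fun h => hdet (by rw [← heval, h, map_zero])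
  filter_upwards [MvPolynomial.ae_eval_ne_zero μ hP] with x hx
  rw [heval] at hx
  calc k = ((M.map (MvPolynomial.eval x)).submatrix ρ γ).rank := by
        rw [rank_of_det_ne_zero hx, Fintype.card_fin]
    _ ≤ (M.map (MvPolynomial.eval x)).rank := rank_submatrix_le _ _ _

end Matrix

/-- If Φ is an ℓ×n random matrix with i.i.d. standard Gaussian entries
(law: the product over the entries of the standard Gaussian measure N(0,1) on ℝ), then for
almost every Φ, rank(Φ·A) = min(ℓ, rank A) for a fixed n×m matrix A. -/
theorem stmt_19 {n m l : ℕ} (A : Matrix (Fin n) (Fin m) ℝ) :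
    ∀ᵐ f ∂(Measure.pi fun _ : Fin l × Fin n => gaussianReal 0 1),
      ((Matrix.of fun i j => f (i, j)) * A).rank = min l A.rank := by
  have : NullSingletonClass (gaussianReal 0 1) := nullSingletonClass_gaussianReal one_ne_zero
  let X : Matrix (Fin l) (Fin n) (MvPolynomial (Fin l × Fin n) ℝ) :=
    Matrix.of fun i j => MvPolynomial.X (i, j)
  let M := X * A.map (MvPolynomial.C : ℝ →+* MvPolynomial (Fin l × Fin n) ℝ)
  have hM : ∀ f, M.map (MvPolynomial.eval f) = Matrix.of (fun i j => f (i, j)) * A := fun f => by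
    ext i j
    simp [M, X, Matrix.mul_apply]
  obtain ⟨Φ, hΦ⟩ := A.exists_min_le_rank_mul l
  filter_upwards [M.ae_le_rank_map_eval _ (k := min l A.rank) (fun ij => Φ ij.1 ij.2)
    (by rwa [hM])] with f hf
  rw [hM] at hf
  exact le_antisymm (le_min (Matrix.rank_le_height _) (Matrix.rank_mul_le_right _ _)) hf
end
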